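/- If b ≠ 0 and (a−2)(a+2) ≠ 0, then there is no x ∈ ℂ with x⁴ + a x² + 1 = 0 and 2b(1+x²)(−16a²x² + (2a + 12x²)(12 + 2a x²)) = 0 simultaneously; i.e., no point [δ : 1 : 0] on the curve C_{a,b} : x⁴ + y⁴ + z⁴ + a x² y² + b(x²+y²)z² = 0 is a flex point. -/

import Mathlib

/-!
Modulo the quartic `x⁴ + ax² + 1`, the factor `1 + x²` of the Hessian reduces to `2 - a` and the
last factor to `36(4 - a²)x²`; a root of the quartic is nonzero, so a common zero forces `a = ±2`.
-/

lemma eq_two_of_quartic_root_of_one_add_sq_eq_zero {R : Type*} [CommRing R] {a x : R}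
    (hroot : x ^ 4 + a * x ^ 2 + 1 = 0) (hx : 1 + x ^ 2 = 0) : a = 2 := by
  linear_combination (x ^ 2 + a - 1) * hx - hroot

lemma hessian_factor_eq {R : Type*} [CommRing R] (a x : R) :
    -16 * a ^ 2 * x ^ 2 + (2 * a + 12 * x ^ 2) * (12 + 2 * a * x ^ 2) =
      24 * a * (x ^ 4 + a * x ^ 2 + 1) + 36 * (4 - a ^ 2) * x ^ 2 := by
  ring

lemma sq_eq_four_of_quartic_root_of_hessian_factor_eq_zero {K : Type*} [Field K] [CharZero K]
    {a x : K} (hroot : x ^ 4 + a * x ^ 2 + 1 = 0)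
    (hQ : -16 * a ^ 2 * x ^ 2 + (2 * a + 12 * x ^ 2) * (12 + 2 * a * x ^ 2) = 0) :
    a ^ 2 = 4 := by
  have hx : x ≠ 0 := by
    rintro rfl
    simp at hroot
  have h : 36 * (4 - a ^ 2) * x ^ 2 = 0 := by
    rw [hessian_factor_eq, hroot] at hQ
    linear_combination hQ
  have h4 : 4 - a ^ 2 = 0 := by simpa [hx] using h
  linear_combination -h4

theorem no_flex_at_infinity (a b : ℂ) (hb : b ≠ 0) (ha : (a - 2) * (a + 2) ≠ 0) :
    ¬ ∃ x : ℂ, x ^ 4 + a * x ^ 2 + 1 = 0 ∧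
      2 * b * (1 + x ^ 2) *
        (-16 * a ^ 2 * x ^ 2 + (2 * a + 12 * x ^ 2) * (12 + 2 * a * x ^ 2)) = 0 := by
  rintro ⟨x, hroot, hhess⟩
  rcases mul_eq_zero.mp hhess with h | hQ
  · rcases mul_eq_zero.mp h with h2b | hx
    · exact mul_ne_zero two_ne_zero hb h2b
    · exact ha (by rw [eq_two_of_quartic_root_of_one_add_sq_eq_zero hroot hx]; ring)
  · have ha2 := sq_eq_four_of_quartic_root_of_hessian_factor_eq_zero hroot hQ
    exact ha (by linear_combination ha2)
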